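/- Suppose C : Ω → (0,∞] is a random variable that is independent of the pair (T, D) and satisfies T̃ = T ∧ C a.s. (so that also D̃ = D·1{T ≤ C} a.s.). Then identity of forces of mortality holds: H̃_j(t) = H_j(t) for all t ∈ 𝒥 and all j = 1,…,d (representativity implies identifiability). -/

import Mathlib

open MeasureTheory Set ENNReal ProbabilityTheory

/-!
Write `G s = P (C ≥ s)`. Since `T̃ = T ∧ C` with `C` independent of `(T, D)`, the at-risk
probability factorises, `P (T̃ ≥ s) = P (T ≥ s) G s`, and an exit of type `j ≥ 1` is an
uncensored event `{T ≤ C}`, so that `μ̃_j = G • μ_j`. For `s ≤ t ∈ 𝒥` we have `G s ≥ P (T̃ > t) > 0`,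
hence `G` cancels in the integrand `S̃(s-)⁻¹ dμ̃_j = (S(s-) G s)⁻¹ G s dμ_j`.
-/

namespace ENNReal

theorem le_toReal_min_ofReal_iff {x : ℝ} (hx : 0 ≤ x) (c : ℝ≥0∞) (s : ℝ) :
    s ≤ (min (ENNReal.ofReal x) c).toReal ↔ s ≤ x ∧ ENNReal.ofReal s ≤ c := by
  rw [← ofReal_le_iff_le_toReal (min_lt_of_left_lt ofReal_lt_top).ne, le_min_iff,
    ofReal_le_ofReal_iff hx]

theorem toReal_min_ofReal_eq_self_iff {x : ℝ} (hx : 0 ≤ x) (c : ℝ≥0∞) :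
    (min (ENNReal.ofReal x) c).toReal = x ↔ ENNReal.ofReal x ≤ c := by
  refine ⟨fun h => ((le_toReal_min_ofReal_iff hx c x).mp h.ge).2, fun h => ?_⟩
  rw [min_eq_left h, toReal_ofReal hx]

end ENNReal

section Censoring

variable {Ω : Type*} [MeasurableSpace Ω]

theorem antitone_measure_setOf_le (P : Measure Ω) (C : Ω → ℝ≥0∞) :
    Antitone fun y => P {ω | y ≤ C ω} :=
  fun _ _ hab => measure_mono fun _ h => hab.trans h

variable {P : Measure Ω}

theorem ProbabilityTheory.IndepFun.measure_inter_setOf_le_eq_setLIntegral [IsFiniteMeasure P]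
    {α : Type*} [MeasurableSpace α] {X : Ω → α} {C : Ω → ℝ≥0∞} {f : α → ℝ≥0∞}
    (hind : IndepFun X C P) (hX : Measurable X) (hC : Measurable C) (hf : Measurable f)
    {B : Set α} (hB : MeasurableSet B) :
    P (X ⁻¹' B ∩ {ω | f (X ω) ≤ C ω}) = ∫⁻ ω in X ⁻¹' B, P {ω' | f (X ω) ≤ C ω'} ∂P := by
  set S : Set (α × ℝ≥0∞) := {p | p.1 ∈ B ∧ f p.1 ≤ p.2}
  have hS : MeasurableSet S :=
    (measurable_fst hB).inter (measurableSet_le (hf.comp measurable_fst) measurable_snd)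
  have hsection : ∀ x, P.map C (Prod.mk x ⁻¹' S) = B.indicator (fun x => P {ω | f x ≤ C ω}) x := by
    intro x
    by_cases hx : x ∈ B
    · have hS_x : Prod.mk x ⁻¹' S = Ici (f x) := by
        ext c
        simp [S, hx]
      rw [indicator_of_mem hx, hS_x, Measure.map_apply hC measurableSet_Ici]
      rfl
    · rw [indicator_of_notMem hx]
      convert measure_empty (μ := P.map C)
      ext c
      simp [S, hx]
  calc P (X ⁻¹' B ∩ {ω | f (X ω) ≤ C ω}) = P ((fun ω => (X ω, C ω)) ⁻¹' S) := rfl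
    _ = (P.map X).prod (P.map C) S := by
      rw [← Measure.map_apply (hX.prodMk hC) hS,
        (indepFun_iff_map_prod_eq_prod_map_map hX.aemeasurable hC.aemeasurable).mp hind]
    _ = ∫⁻ x in B, P {ω | f x ≤ C ω} ∂P.map X := by
      rw [Measure.prod_apply hS, lintegral_congr hsection, lintegral_indicator hB]
    _ = _ := setLIntegral_map hB ((antitone_measure_setOf_le P C).measurable.comp hf) hX

variable {T Tt : Ω → ℝ} {C : Ω → ℝ≥0∞}

theorem measure_le_censored_eq_mul (hind : IndepFun C T P) (hT : ∀ᵐ ω ∂P, 0 ≤ T ω)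
    (hmin : ∀ᵐ ω ∂P, Tt ω = (min (ENNReal.ofReal (T ω)) (C ω)).toReal) (s : ℝ) :
    P {ω | s ≤ Tt ω} = P {ω | s ≤ T ω} * P {ω | ENNReal.ofReal s ≤ C ω} := by
  have hevent : ({ω | s ≤ Tt ω} : Set Ω) =ᵐ[P]
      ({ω | s ≤ T ω} ∩ {ω | ENNReal.ofReal s ≤ C ω} : Set Ω) := by
    refine Filter.eventuallyEq_set.mpr ?_
    filter_upwards [hT, hmin] with ω hT hmin
    exact hmin ▸ le_toReal_min_ofReal_iff hT _ _
  rw [measure_congr hevent]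
  exact hind.symm.measure_inter_preimage_eq_mul _ _ measurableSet_Ici measurableSet_Ici

theorem measure_lt_censored_le (hT : ∀ᵐ ω ∂P, 0 ≤ T ω)
    (hmin : ∀ᵐ ω ∂P, Tt ω = (min (ENNReal.ofReal (T ω)) (C ω)).toReal) {s t : ℝ} (hst : s ≤ t) :
    P {ω | t < Tt ω} ≤ P {ω | ENNReal.ofReal s ≤ C ω} := by
  refine measure_mono_ae ?_
  filter_upwards [hT, hmin] with ω hT hmin (hlt : t < Tt ω)
  rw [hmin] at hlt
  exact ((le_toReal_min_ofReal_iff hT _ _).mp (hst.trans hlt.le)).2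

theorem map_restrict_censored_eq_withDensity [IsFiniteMeasure P] {D Dt : Ω → ℕ}
    (hT : Measurable T) (hD : Measurable D) (hTt : Measurable Tt) (hC : Measurable C)
    (hind : IndepFun C (fun ω => (T ω, D ω)) P) (hT0 : ∀ᵐ ω ∂P, 0 ≤ T ω)
    (hmin : ∀ᵐ ω ∂P, Tt ω = (min (ENNReal.ofReal (T ω)) (C ω)).toReal)
    (hDD : ∀ᵐ ω ∂P, Dt ω = if Tt ω = T ω then D ω else 0) {j : ℕ} (hj : j ≠ 0) :
    Measure.map Tt (P.restrict {ω | Dt ω = j}) =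
      (Measure.map T (P.restrict {ω | D ω = j})).withDensity
        fun s => P {ω | ENNReal.ofReal s ≤ C ω} := by
  have hG : Measurable fun s => P {ω | ENNReal.ofReal s ≤ C ω} :=
    (antitone_measure_setOf_le P C).measurable.comp measurable_ofReal
  ext A hA
  have hevent : (Tt ⁻¹' A ∩ {ω | Dt ω = j} : Set Ω) =ᵐ[P]
      ((fun ω => (T ω, D ω)) ⁻¹' (A ×ˢ {j}) ∩ {ω | ENNReal.ofReal (T ω) ≤ C ω} : Set Ω) := by
    refine Filter.eventuallyEq_set.mpr ?_
    filter_upwards [hT0, hmin, hDD] with ω hT0 hmin hDD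
    have huncensored : Tt ω = T ω ↔ ENNReal.ofReal (T ω) ≤ C ω := by
      rw [hmin]
      exact toReal_min_ofReal_eq_self_iff hT0 _
    by_cases h : Tt ω = T ω
    · simp [hDD, h, ← huncensored]
    · simp [hDD, h, ← huncensored, Ne.symm hj]
  rw [Measure.map_apply hTt hA, Measure.restrict_apply (hTt hA), measure_congr hevent,
    hind.symm.measure_inter_setOf_le_eq_setLIntegral (f := fun p : ℝ × ℕ => ENNReal.ofReal p.1)
      (hT.prodMk hD) hC (measurable_ofReal.comp measurable_fst)
      (hA.prod (measurableSet_singleton j)),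
    withDensity_apply _ hA,
    setLIntegral_map hA hG hT,
    Measure.restrict_restrict (hT hA)]
  rfl

end Censoring

theorem setLIntegral_inv_withDensity_of_eq_mul {α : Type*} [MeasurableSpace α] {ν : Measure α}
    {G R R' : α → ℝ≥0∞} {s : Set α} (hs : MeasurableSet s) (hG : Measurable G)
    (hG0 : ∀ x ∈ s, G x ≠ 0) (hGtop : ∀ x ∈ s, G x ≠ ∞) (hR : ∀ x ∈ s, R' x = R x * G x) :
    ∫⁻ x in s, (R' x)⁻¹ ∂ν.withDensity G = ∫⁻ x in s, (R x)⁻¹ ∂ν := by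
  rw [restrict_withDensity hs, lintegral_withDensity_eq_lintegral_mul_non_measurable _ hG
    (ae_restrict_of_forall_mem hs fun x hx => (hGtop x hx).lt_top)]
  refine setLIntegral_congr_fun hs fun x hx => ?_
  rw [Pi.mul_apply, hR x hx, ENNReal.mul_inv (Or.inr (hGtop x hx)) (Or.inr (hG0 x hx)),
    mul_comm, mul_assoc, ENNReal.inv_mul_cancel (hG0 x hx) (hGtop x hx), mul_one]

theorem independent_censoring_implies_identity_of_forces_general
    {Ω : Type*} [m0 : MeasurableSpace Ω] (P : Measure Ω) [IsProbabilityMeasure P]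
    (d : ℕ)
    (T Tt : Ω → ℝ) (D Dt : Ω → ℕ)
    (hT : Measurable T) (hTt : Measurable Tt)
    (hD : Measurable D)
    (hpos : ∀ᵐ ω ∂P, 0 < Tt ω ∧ Tt ω ≤ T ω)
    (hDD : ∀ᵐ ω ∂P, Dt ω = if Tt ω = T ω then D ω else 0)
    (μ μt : ℕ → Measure ℝ)
    (hμ : ∀ j, μ j = Measure.map T (P.restrict {ω | D ω = j}))
    (hμt : ∀ j, μt j = Measure.map Tt (P.restrict {ω | Dt ω = j}))
    (H Ht : ℕ → ℝ → ℝ≥0∞)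
    (hH : ∀ j t, H j t = ∫⁻ s in Ioc 0 t, (P {ω | s ≤ T ω})⁻¹ ∂(μ j))
    (hHt : ∀ j t, Ht j t = ∫⁻ s in Ioc 0 t, (P {ω | s ≤ Tt ω})⁻¹ ∂(μt j))
    (𝒥 : Set ℝ) (h𝒥 : 𝒥 = {t | 0 ≤ t ∧ 0 < P {ω | t < Tt ω}})
    -- the censoring time C : Ω → (0,∞]
    (C : Ω → ℝ≥0∞) (hC : Measurable C)
    (hindep : IndepFun C (fun ω => (T ω, D ω)) P)
    (hmin : ∀ᵐ ω ∂P, Tt ω = (min (ENNReal.ofReal (T ω)) (C ω)).toReal) :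
    -- identity of forces of mortality
    ∀ j, 1 ≤ j → j ≤ d → ∀ t ∈ 𝒥, Ht j t = H j t := by
  intro j hj _ t ht
  rw [h𝒥] at ht
  have hT0 : ∀ᵐ ω ∂P, 0 ≤ T ω := hpos.mono fun _ h => (h.1.trans_le h.2).le
  have hμtj : μt j = (μ j).withDensity fun s => P {ω | ENNReal.ofReal s ≤ C ω} := by
    rw [hμt, hμ]
    exact map_restrict_censored_eq_withDensity hT hD hTt hC hindep hT0 hmin hDD
      (Nat.one_le_iff_ne_zero.mp hj)
  rw [hHt, hH, hμtj]
  exact setLIntegral_inv_withDensity_of_eq_mul measurableSet_Ioc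
    ((antitone_measure_setOf_le P C).measurable.comp measurable_ofReal)
    (fun s hs => (ht.2.trans_le (measure_lt_censored_le hT0 hmin hs.2)).ne')
    (fun _ _ => measure_ne_top P _)
    (fun s _ => measure_le_censored_eq_mul (hindep.comp measurable_id measurable_fst) hT0 hmin s)

/-- Proposition 4 (part): representativity (existence of an independent censoring time on the
same space) implies identifiability (identity of forces of mortality). -/
theorem independent_censoring_implies_identity_of_forces
    {Ω : Type*} [m0 : MeasurableSpace Ω] (P : Measure Ω) [IsProbabilityMeasure P]
    (d : ℕ) (hd : 1 ≤ d)
    (T Tt : Ω → ℝ) (D Dt : Ω → ℕ)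
    (hT : Measurable T) (hTt : Measurable Tt)
    (hD : Measurable D) (hDt : Measurable Dt)
    (hpos : ∀ᵐ ω ∂P, 0 < Tt ω ∧ Tt ω ≤ T ω)
    (hDrange : ∀ ω, 1 ≤ D ω ∧ D ω ≤ d)
    (hDtrange : ∀ ω, Dt ω ≤ d)
    (hDD : ∀ᵐ ω ∂P, Dt ω = if Tt ω = T ω then D ω else 0)
    (μ μt : ℕ → Measure ℝ)
    (hμ : ∀ j, μ j = Measure.map T (P.restrict {ω | D ω = j}))
    (hμt : ∀ j, μt j = Measure.map Tt (P.restrict {ω | Dt ω = j}))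
    (H Ht : ℕ → ℝ → ℝ≥0∞)
    (hH : ∀ j t, H j t = ∫⁻ s in Ioc 0 t, (P {ω | s ≤ T ω})⁻¹ ∂(μ j))
    (hHt : ∀ j t, Ht j t = ∫⁻ s in Ioc 0 t, (P {ω | s ≤ Tt ω})⁻¹ ∂(μt j))
    (𝒥 : Set ℝ) (h𝒥 : 𝒥 = {t | 0 ≤ t ∧ 0 < P {ω | t < Tt ω}})
    -- the censoring time C : Ω → (0,∞]
    (C : Ω → ℝ≥0∞) (hC : Measurable C) (hCpos : ∀ ω, 0 < C ω)
    (hindep : IndepFun C (fun ω => (T ω, D ω)) P)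
    (hmin : ∀ᵐ ω ∂P, Tt ω = (min (ENNReal.ofReal (T ω)) (C ω)).toReal) :
    -- identity of forces of mortality
    ∀ j, 1 ≤ j → j ≤ d → ∀ t ∈ 𝒥, Ht j t = H j t :=
  independent_censoring_implies_identity_of_forces_general (m0 := m0) P d T Tt D Dt hT hTt hD hpos
    hDD μ μt hμ hμt H Ht hH hHt 𝒥 h𝒥 C hC hindep hmin
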